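/- Let n ≥ 3, let c, a_2, …, a_n ∈ [0,1] satisfy c² ≥ a_2² + ⋯ + a_n², let f, η, k, ω, α, μ be as in the multiqubit monogamy setting. If for each i = 2,…,n-1 one has f(a_i)^η ≥ k^ω f(√(a_{i+1}²+⋯+a_n²))^η, then f(c)^α ≥ μ·(f(a_2)^α + (1/2)^(α/η) f(a_3)^α + ⋯ + (1/2)^((n-3)α/η) f(a_{n-1})^α) + (1/2)^((n-2)α/η) f(a_n)^α. -/

import Mathlib

/-! Put `b i = √(a i ^ 2 + ⋯ + a n ^ 2)`, so that `b i ^ 2 = a i ^ 2 + b (i + 1) ^ 2`.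
Superadditivity gives `f (b i) ^ η ≥ f (a i) ^ η + f (b (i + 1)) ^ η`, where by hypothesis
`f (a i) ^ η ≥ K * f (b (i + 1)) ^ η` with `K = k ^ ω`. For `x = α / η ≤ 1 / 2` and `t ≥ K * s`
one has `μ * t ^ x + 2⁻ˣ * s ^ x ≤ (t + s) ^ x`, because `u ↦ (1 + u) ^ x - 2⁻ˣ * u ^ x` is
decreasing on `[0, K⁻¹]` and equals `μ` at `K⁻¹`. Hence
`f (b i) ^ α ≥ μ * f (a i) ^ α + 2⁻ˣ * f (b (i + 1)) ^ α`; iterating from `i = 2` to `n - 1` and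
using `b 2 ≤ c` gives the theorem. -/

open Real

/-- The paper's `μ`, with `K = k ^ ω` and `x = α / η`. -/
noncomputable def monogamyFactor (K x : ℝ) : ℝ := ((1 + K) ^ x - (1 / 2) ^ x) / K ^ x

theorem antitoneOn_one_add_rpow_sub_mul_rpow {x c U : ℝ} (hx0 : 0 ≤ x) (hx1 : x ≤ 1)
    (hU : 0 < U) (hc : (1 + U⁻¹) ^ (x - 1) ≤ c) :
    AntitoneOn (fun u => (1 + u) ^ x - c * u ^ x) (Set.Icc 0 U) := by
  refine antitoneOn_of_hasDerivWithinAt_nonpos (convex_Icc 0 U)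
    (f' := fun u => x * (1 + u) ^ (x - 1) - c * (x * u ^ (x - 1))) ?_ ?_ ?_
  · refine ContinuousOn.sub ?_ (continuousOn_const.mul ?_)
    · exact (continuousOn_const.add continuousOn_id).rpow_const fun u _ => Or.inr hx0
    · exact continuousOn_id.rpow_const fun u _ => Or.inr hx0
  · rw [interior_Icc]
    intro u hu
    have hu0 : 0 < u := hu.1
    have h := (((hasDerivAt_id u).const_add 1).rpow_const (p := x)
      (Or.inl (by positivity : (1 : ℝ) + u ≠ 0))).sub
        (((hasDerivAt_id u).rpow_const (p := x) (Or.inl hu0.ne')).const_mul c)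
    simp only [id, one_mul] at h
    exact h.hasDerivWithinAt
  · rw [interior_Icc]
    rintro u ⟨hu0, huU⟩
    have key : (1 + u) ^ (x - 1) ≤ c * u ^ (x - 1) := by
      have hsplit : 1 + u = u * (1 + u⁻¹) := by field_simp; ring
      have hmono : (1 + u⁻¹) ^ (x - 1) ≤ (1 + U⁻¹) ^ (x - 1) :=
        rpow_le_rpow_of_nonpos (by positivity) (by gcongr) (by linarith)
      rw [hsplit, mul_rpow hu0.le (by positivity), mul_comm c]
      gcongr
      exact hmono.trans hc
    have := mul_le_mul_of_nonneg_left key hx0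
    linarith

theorem one_add_rpow_sub_one_le_half_rpow {x K : ℝ} (hx : x ≤ 1 / 2) (hK : 1 ≤ K) :
    (1 + K) ^ (x - 1) ≤ (1 / 2) ^ x :=
  calc (1 + K) ^ (x - 1) ≤ 2 ^ (x - 1) :=
        rpow_le_rpow_of_nonpos (by norm_num) (by linarith) (by linarith)
    _ ≤ 2 ^ (-x) := rpow_le_rpow_of_exponent_le (by norm_num) (by linarith)
    _ = (1 / 2) ^ x := by rw [rpow_neg (by norm_num), one_div, inv_rpow (by norm_num)]

theorem monogamyFactor_mul_rpow_add_le {x K s t : ℝ} (hx0 : 0 ≤ x) (hx : x ≤ 1 / 2)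
    (hK : 1 ≤ K) (hs : 0 ≤ s) (hst : K * s ≤ t) :
    monogamyFactor K x * t ^ x + (1 / 2) ^ x * s ^ x ≤ (t + s) ^ x := by
  obtain rfl | hx0 := hx0.eq_or_lt
  · simp [monogamyFactor]
  have hK0 : 0 < K := by linarith
  obtain rfl | ht := (hs.trans (le_mul_of_one_le_left hs hK) |>.trans hst).eq_or_lt
  · obtain rfl : s = 0 := by nlinarith
    simp [zero_rpow hx0.ne']
  set u := s / t
  have hu : u ∈ Set.Icc 0 K⁻¹ :=
    ⟨by positivity, by rw [div_le_iff₀ ht, inv_mul_eq_div, le_div_iff₀ hK0]; linarith⟩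
  have hanti := antitoneOn_one_add_rpow_sub_mul_rpow (c := (1 / 2) ^ x) hx0.le (by linarith)
    (inv_pos.2 hK0) (by rw [inv_inv]; exact one_add_rpow_sub_one_le_half_rpow hx hK) hu
    ⟨inv_nonneg.2 hK0.le, le_rfl⟩ hu.2
  have hμ : (1 + K⁻¹) ^ x - (1 / 2) ^ x * K⁻¹ ^ x = monogamyFactor K x := by
    have h : 1 + K⁻¹ = (1 + K) / K := by field_simp; ring
    rw [monogamyFactor, h, div_rpow (by linarith) hK0.le, inv_rpow hK0.le]
    ring
  have hs_eq : s = t * u := by simp only [u]; field_simp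
  have hts : t + s = t * (1 + u) := by rw [hs_eq]; ring
  simp only [hμ] at hanti
  rw [hts, hs_eq, mul_rpow ht.le hu.1, mul_rpow ht.le (by linarith [hu.1])]
  nlinarith [rpow_pos_of_pos ht x]

theorem monogamyFactor_mul_rpow_add_le_of_rpow_add_le {A B C η α K : ℝ} (hA : 0 ≤ A)
    (hB : 0 ≤ B) (hC : 0 ≤ C) (hη : 0 < η) (hα0 : 0 ≤ α) (hα : α ≤ η / 2) (hK : 1 ≤ K)
    (hAB : K * B ^ η ≤ A ^ η) (hABC : A ^ η + B ^ η ≤ C ^ η) :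
    monogamyFactor K (α / η) * A ^ α + (1 / 2) ^ (α / η) * B ^ α ≤ C ^ α := by
  have hpow : ∀ {z : ℝ}, 0 ≤ z → (z ^ η) ^ (α / η) = z ^ α := fun hz => by
    rw [← rpow_mul hz, mul_div_cancel₀ _ hη.ne']
  have hx : α / η ≤ 1 / 2 := by rw [div_le_iff₀ hη]; linarith
  have hx0 : 0 ≤ α / η := div_nonneg hα0 hη.le
  calc monogamyFactor K (α / η) * A ^ α + (1 / 2) ^ (α / η) * B ^ α
      = monogamyFactor K (α / η) * (A ^ η) ^ (α / η) + (1 / 2) ^ (α / η) * (B ^ η) ^ (α / η) := by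
        rw [hpow hA, hpow hB]
    _ ≤ (A ^ η + B ^ η) ^ (α / η) :=
        monogamyFactor_mul_rpow_add_le hx0 hx hK (by positivity) hAB
    _ ≤ (C ^ η) ^ (α / η) := by gcongr
    _ = C ^ α := hpow hC

section tailNorm

variable (a : ℕ → ℝ) (n : ℕ)

noncomputable def tailNorm (i : ℕ) : ℝ := √(∑ j ∈ Finset.Icc i n, a j ^ 2)

variable {a n}

theorem sq_add_tailNorm_succ_sq {i : ℕ} (hi : i ≤ n) :
    a i ^ 2 + tailNorm a n (i + 1) ^ 2 = tailNorm a n i ^ 2 := by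
  simp only [tailNorm, sq_sqrt (Finset.sum_nonneg fun _ _ => sq_nonneg _)]
  rw [Finset.Icc_eq_cons_Ioc hi, Finset.sum_cons, ← Finset.Icc_add_one_left_eq_Ioc]

theorem tailNorm_self (ha : 0 ≤ a n) : tailNorm a n n = a n := by
  simp [tailNorm, sqrt_sq ha]

theorem tailNorm_antitone : Antitone (tailNorm a n) := fun _ _ hij =>
  sqrt_le_sqrt <| Finset.sum_le_sum_of_subset_of_nonneg (Finset.Icc_subset_Icc hij le_rfl)
    fun _ _ _ => sq_nonneg _

end tailNorm

theorem mul_sum_Ico_pow_mul_add_pow_mul_le {R : Type*} [CommSemiring R] [PartialOrder R]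
    [IsOrderedRing R] {F G : ℕ → R} {μ r : R} (hr : 0 ≤ r) {m n : ℕ} (hmn : m ≤ n)
    (h : ∀ i, m ≤ i → i < n → μ * G i + r * F (i + 1) ≤ F i) :
    μ * ∑ i ∈ Finset.Ico m n, r ^ (i - m) * G i + r ^ (n - m) * F n ≤ F m := by
  induction n, hmn using Nat.le_induction with
  | base => simp
  | succ n hmn ih =>
    calc μ * ∑ i ∈ Finset.Ico m (n + 1), r ^ (i - m) * G i + r ^ (n + 1 - m) * F (n + 1)
        = μ * ∑ i ∈ Finset.Ico m n, r ^ (i - m) * G i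
            + r ^ (n - m) * (μ * G n + r * F (n + 1)) := by
          rw [Finset.sum_Ico_succ_top hmn, Nat.sub_add_comm hmn, pow_succ]
          ring
      _ ≤ μ * ∑ i ∈ Finset.Ico m n, r ^ (i - m) * G i + r ^ (n - m) * F n := by
          gcongr
          exact h n hmn n.lt_succ_self
      _ ≤ F m := ih fun i hi hin => h i hi (by omega)

theorem stmt_16 (n : ℕ) (hn : 3 ≤ n) (c : ℝ) (a : ℕ → ℝ)
    (hc0 : 0 ≤ c) (hc1 : c ≤ 1)
    (ha0 : ∀ i, 0 ≤ a i) (ha1 : ∀ i, a i ≤ 1)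
    (hckw : c ^ 2 ≥ ∑ i ∈ Finset.Icc 2 n, a i ^ 2)
    (f : ℝ → ℝ) (η k ω α : ℝ)
    (hf_nonneg : ∀ z ∈ Set.Icc (0 : ℝ) 1, 0 ≤ f z)
    (hf_mono : MonotoneOn f (Set.Icc (0 : ℝ) 1))
    (hη : 1 ≤ η)
    (hf_super : ∀ u v : ℝ, 0 ≤ u → 0 ≤ v → u ^ 2 + v ^ 2 ≤ 1 →
      f (Real.sqrt (u ^ 2 + v ^ 2)) ^ η ≥ f u ^ η + f v ^ η)
    (hk : 1 ≤ k) (hω : 1 ≤ ω) (hα0 : 0 ≤ α) (hα : α ≤ η / 2)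
    (hcond : ∀ i, 2 ≤ i → i ≤ n - 1 →
      f (a i) ^ η ≥ k ^ ω * f (Real.sqrt (∑ j ∈ Finset.Icc (i + 1) n, a j ^ 2)) ^ η) :
    f c ^ α ≥
      (((1 + k ^ ω) ^ (α / η) - (1 / 2 : ℝ) ^ (α / η)) / k ^ (ω * α / η)) *
          (∑ i ∈ Finset.Icc 2 (n - 1),
            (1 / 2 : ℝ) ^ ((i - 2 : ℕ) * α / η) * f (a i) ^ α) +
        (1 / 2 : ℝ) ^ ((n - 2 : ℕ) * α / η) * f (a n) ^ α := by
  set b := tailNorm a n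
  have hb_le_c : b 2 ≤ c := (sqrt_le_sqrt hckw).trans_eq (sqrt_sq hc0)
  have hb_mem : ∀ i, 2 ≤ i → b i ∈ Set.Icc 0 1 := fun i hi =>
    ⟨sqrt_nonneg _, (tailNorm_antitone hi).trans (hb_le_c.trans hc1)⟩
  have hstep : ∀ i, 2 ≤ i → i < n → monogamyFactor (k ^ ω) (α / η) * f (a i) ^ α
      + (1 / 2) ^ (α / η) * f (b (i + 1)) ^ α ≤ f (b i) ^ α := fun i hi hin => by
    obtain ⟨hb0, hb1⟩ := hb_mem (i + 1) (by omega)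
    obtain ⟨hbi0, hbi1⟩ := hb_mem i hi
    have hsq := sq_add_tailNorm_succ_sq (a := a) hin.le
    have hsuper := hf_super (a i) (b (i + 1)) (ha0 i) hb0 (hsq ▸ pow_le_one₀ hbi0 hbi1)
    rw [hsq, sqrt_sq hbi0] at hsuper
    exact monogamyFactor_mul_rpow_add_le_of_rpow_add_le (hf_nonneg _ ⟨ha0 i, ha1 i⟩)
      (hf_nonneg _ ⟨hb0, hb1⟩) (hf_nonneg _ ⟨hbi0, hbi1⟩) (by linarith) hα0 hα
      (one_le_rpow hk (by linarith)) (hcond i hi (by omega)) hsuper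
  have hhalf : ∀ m : ℕ, (1 / 2 : ℝ) ^ ((m : ℝ) * α / η) = ((1 / 2) ^ (α / η)) ^ m := fun m => by
    rw [mul_div_assoc, mul_comm, rpow_mul_natCast (by norm_num)]
  have hIcc : Finset.Icc 2 (n - 1) = Finset.Ico 2 n := by
    ext; simp only [Finset.mem_Icc, Finset.mem_Ico]; omega
  rw [ge_iff_le, mul_div_assoc, rpow_mul (by linarith), hIcc, ← tailNorm_self (ha0 n)]
  simp only [hhalf]
  calc _ ≤ f (b 2) ^ α := mul_sum_Ico_pow_mul_add_pow_mul_le (F := fun i => f (b i) ^ α)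
          (G := fun i => f (a i) ^ α) (by positivity) (by omega) hstep
    _ ≤ f c ^ α := rpow_le_rpow (hf_nonneg _ (hb_mem 2 le_rfl))
          (hf_mono (hb_mem 2 le_rfl) ⟨hc0, hc1⟩ hb_le_c) hα0
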